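/- Let Λ_av = (1/m) Σ_{k=1}^m Λ_k be the average of left-stochastic matrices Λ_1,…,Λ_m, and suppose Λ = Σ_k q_k Λ_k is any convex combination of the Λ_k. If C = Λ_av⁻¹ exists, then for every probability vector p, (1/2)‖C(Λ p) − p‖₁ ≤ (1/2)‖C‖_{1→1} · max_k ‖Λ_av − Λ_k‖_{1→1}. -/

import Mathlib

/-!
`Λ' ↦ ‖C (Λ' p) - p‖₁` is convex, being an `ℓ¹` norm composed with an affine map, so on the
convex hull of the `Λₖ` it is largest at one of the `Λₖ`. There `C Λ_av = 1` turns the error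
into `C ((Λₖ - Λ_av) p)`, whose `ℓ¹` norm is at most `‖C‖₁₁ ‖Λₖ - Λ_av‖₁₁ ‖p‖₁`, and `‖p‖₁ = 1`.
-/

/-- A left-stochastic matrix: nonnegative entries, each column sums to 1. -/
def LeftStochastic {ι : Type*} [Fintype ι] (A : Matrix ι ι ℝ) : Prop :=
  (∀ i j, 0 ≤ A i j) ∧ ∀ j, ∑ i, A i j = 1

/-- A probability vector: nonnegative entries summing to 1. -/
def ProbVec {ι : Type*} [Fintype ι] (p : ι → ℝ) : Prop :=
  (∀ i, 0 ≤ p i) ∧ ∑ i, p i = 1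

/-- The ℓ1→ℓ1 induced operator norm, i.e. the maximal column sum of absolute values. -/
noncomputable def opNorm11 {n : ℕ} (A : Matrix (Fin (n + 1)) (Fin (n + 1)) ℝ) : ℝ :=
  Finset.univ.sup' Finset.univ_nonempty (fun j => ∑ i, |A i j|)

open Matrix Set

lemma ProbVec.sum_abs {ι : Type*} [Fintype ι] {p : ι → ℝ} (hp : ProbVec p) :
    ∑ i, |p i| = 1 := by
  rw [← hp.2]
  exact Finset.sum_congr rfl fun i _ => abs_of_nonneg (hp.1 i)

lemma convexOn_sum_abs {ι : Type*} [Fintype ι] :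
    ConvexOn ℝ univ (fun x : ι → ℝ => ∑ i, |x i|) := by
  refine ⟨convex_univ, fun x _ y _ a b ha hb _ => ?_⟩
  simp only [Pi.add_apply, Pi.smul_apply, smul_eq_mul, Finset.mul_sum, ← Finset.sum_add_distrib]
  gcongr with i
  calc |a * x i + b * y i| ≤ |a * x i| + |b * y i| := abs_add_le _ _
    _ = a * |x i| + b * |y i| := by rw [abs_mul, abs_mul, abs_of_nonneg ha, abs_of_nonneg hb]

section OpNorm11

variable {n : ℕ}

lemma opNorm11_nonneg (A : Matrix (Fin (n + 1)) (Fin (n + 1)) ℝ) : 0 ≤ opNorm11 A :=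
  (Finset.sum_nonneg fun i _ => abs_nonneg (A i 0)).trans
    (Finset.le_sup' (fun j => ∑ i, |A i j|) (Finset.mem_univ 0))

lemma opNorm11_sub_comm (A B : Matrix (Fin (n + 1)) (Fin (n + 1)) ℝ) :
    opNorm11 (A - B) = opNorm11 (B - A) := by
  unfold opNorm11
  congr 1
  funext j
  exact Finset.sum_congr rfl fun i _ => abs_sub_comm (A i j) (B i j)

lemma sum_abs_mulVec_le (A : Matrix (Fin (n + 1)) (Fin (n + 1)) ℝ) (x : Fin (n + 1) → ℝ) :
    ∑ i, |(A *ᵥ x) i| ≤ opNorm11 A * ∑ j, |x j| :=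
  calc ∑ i, |(A *ᵥ x) i| ≤ ∑ i, ∑ j, |A i j * x j| :=
        Finset.sum_le_sum fun i _ => Finset.abs_sum_le_sum_abs (fun j => A i j * x j) Finset.univ
    _ = ∑ j, (∑ i, |A i j|) * |x j| := by
        rw [Finset.sum_comm]
        simp only [abs_mul, Finset.sum_mul]
    _ ≤ ∑ j, opNorm11 A * |x j| := by
        gcongr with j
        exact Finset.le_sup' (fun j => ∑ i, |A i j|) (Finset.mem_univ j)
    _ = opNorm11 A * ∑ j, |x j| := by rw [Finset.mul_sum]

lemma sum_abs_mulVec_mulVec_sub_le {C Λav : Matrix (Fin (n + 1)) (Fin (n + 1)) ℝ}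
    (hC : C * Λav = 1) (Λ : Matrix (Fin (n + 1)) (Fin (n + 1)) ℝ) (p : Fin (n + 1) → ℝ) :
    ∑ i, |(C *ᵥ (Λ *ᵥ p) - p) i| ≤ opNorm11 C * (opNorm11 (Λ - Λav) * ∑ j, |p j|) := by
  have herror : C *ᵥ (Λ *ᵥ p) - p = C *ᵥ ((Λ - Λav) *ᵥ p) := by
    rw [sub_mulVec, mulVec_sub, mulVec_mulVec p C Λav, hC, one_mulVec]
  rw [herror]
  exact (sum_abs_mulVec_le C _).trans
    (mul_le_mul_of_nonneg_left (sum_abs_mulVec_le _ p) (opNorm11_nonneg C))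

end OpNorm11

section CorrectionError

variable {ι κ : Type*} [Fintype ι] [Fintype κ]

noncomputable def correctionError (C : Matrix ι κ ℝ) (p : ι → ℝ) :
    Matrix κ ι ℝ →ᵃ[ℝ] (ι → ℝ) :=
  (C.mulVecLin ∘ₗ (mulVecBilin ℝ ℝ).flip p).toAffineMap - AffineMap.const ℝ _ p

lemma exists_sum_abs_mulVec_sum_smul_mulVec_sub_le {m : Type*} [Fintype m] (C : Matrix ι κ ℝ)
    (p : ι → ℝ) (Λs : m → Matrix κ ι ℝ) (q : m → ℝ) (hq0 : ∀ k, 0 ≤ q k)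
    (hq1 : ∑ k, q k = 1) :
    ∃ k, ∑ i, |(C *ᵥ ((∑ k, q k • Λs k) *ᵥ p) - p) i|
      ≤ ∑ i, |(C *ᵥ (Λs k *ᵥ p) - p) i| := by
  have hmem : ∑ k, q k • Λs k ∈ convexHull ℝ (range Λs) :=
    mem_convexHull_of_exists_fintype q Λs hq0 hq1 (fun k => ⟨k, rfl⟩) rfl
  obtain ⟨_, ⟨k, rfl⟩, hk⟩ := (convexOn_sum_abs.comp_affineMap
    (correctionError C p)).exists_ge_of_mem_convexHull (subset_univ _) hmem
  exact ⟨k, hk⟩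

end CorrectionError

theorem stmt_7_general {n m : ℕ} (Λs : Fin (m + 1) → Matrix (Fin (n + 1)) (Fin (n + 1)) ℝ)
    (Λav : Matrix (Fin (n + 1)) (Fin (n + 1)) ℝ)
    (q : Fin (m + 1) → ℝ) (hq0 : ∀ k, 0 ≤ q k) (hq1 : ∑ k, q k = 1)
    (Λ : Matrix (Fin (n + 1)) (Fin (n + 1)) ℝ) (hΛ : Λ = ∑ k, q k • Λs k)
    (C : Matrix (Fin (n + 1)) (Fin (n + 1)) ℝ)
    (hC : C * Λav = 1 ∧ Λav * C = 1)
    (p : Fin (n + 1) → ℝ) (hp : ProbVec p) :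
    (1 / 2) * ∑ i, |(C.mulVec (Λ.mulVec p) - p) i|
      ≤ (1 / 2) * opNorm11 C *
        Finset.univ.sup' Finset.univ_nonempty (fun k => opNorm11 (Λav - Λs k)) := by
  obtain ⟨k, hk⟩ := exists_sum_abs_mulVec_sum_smul_mulVec_sub_le C p Λs q hq0 hq1
  rw [← hΛ] at hk
  have hvertex := sum_abs_mulVec_mulVec_sub_le hC.1 (Λs k) p
  rw [hp.sum_abs, mul_one, opNorm11_sub_comm] at hvertex
  have hmax := Finset.le_sup' (fun k => opNorm11 (Λav - Λs k)) (Finset.mem_univ k)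
  rw [mul_assoc]
  gcongr
  calc ∑ i, |(C *ᵥ (Λ *ᵥ p) - p) i| ≤ ∑ i, |(C *ᵥ (Λs k *ᵥ p) - p) i| := hk
    _ ≤ opNorm11 C * opNorm11 (Λav - Λs k) := hvertex
    _ ≤ _ := mul_le_mul_of_nonneg_left hmax (opNorm11_nonneg C)

/-- Proposition 1: if Λ_av is the average of the noise matrices Λ_k, Λ is any convex
combination of the Λ_k, and C = Λ_av⁻¹, then the total variation distance between the
corrected distribution C(Λp) and the ideal p is at most
(1/2)‖C‖₁₁ · max_k ‖Λ_av − Λ_k‖₁₁. -/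
theorem stmt_7 {n m : ℕ} (Λs : Fin (m + 1) → Matrix (Fin (n + 1)) (Fin (n + 1)) ℝ)
    (hΛs : ∀ k, LeftStochastic (Λs k))
    (Λav : Matrix (Fin (n + 1)) (Fin (n + 1)) ℝ)
    (hΛav : Λav = (1 / (m + 1 : ℝ)) • ∑ k, Λs k)
    (q : Fin (m + 1) → ℝ) (hq0 : ∀ k, 0 ≤ q k) (hq1 : ∑ k, q k = 1)
    (Λ : Matrix (Fin (n + 1)) (Fin (n + 1)) ℝ) (hΛ : Λ = ∑ k, q k • Λs k)
    (C : Matrix (Fin (n + 1)) (Fin (n + 1)) ℝ)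
    (hC : C * Λav = 1 ∧ Λav * C = 1)
    (p : Fin (n + 1) → ℝ) (hp : ProbVec p) :
    (1 / 2) * ∑ i, |(C.mulVec (Λ.mulVec p) - p) i|
      ≤ (1 / 2) * opNorm11 C *
        Finset.univ.sup' Finset.univ_nonempty (fun k => opNorm11 (Λav - Λs k)) :=
  stmt_7_general Λs Λav q hq0 hq1 Λ hΛ C hC p hp
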